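/- In a random game G(2,n) with n ≥ 1, the number of Column actions surviving iterated elimination satisfies: Pr(S^C(2,n) = 1) = (2n−1)!!/(2^{n−1}·n!), and for every k with 2 ≤ k ≤ n, Pr(S^C(2,n) = k) = (s(n,k)/n!)·(1 − 1/2^{k−1}). -/

import Mathlib

open Finset Filter

noncomputable section

/-- Row action `i` is strictly dominated in the restricted game with Row actions `X`
and Column actions `Y`, for Row payoff matrix `R`. -/
def RowDomIn {m n : ℕ} (R : Fin m → Fin n → ℝ) (X : Finset (Fin m)) (Y : Finset (Fin n))
    (i : Fin m) : Prop :=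
  ∃ i' ∈ X, ∀ j ∈ Y, R i j < R i' j

/-- Column action `j` is strictly dominated in the restricted game with Row actions `X`
and Column actions `Y`, for Column payoff matrix `C`. -/
def ColDomIn {m n : ℕ} (C : Fin m → Fin n → ℝ) (X : Finset (Fin m)) (Y : Finset (Fin n))
    (j : Fin n) : Prop :=
  ∃ j' ∈ Y, ∀ i ∈ X, C i j < C i j'

open Classical in
/-- One round of iterated elimination: simultaneously delete every strictly dominated
action of both players in the current restricted game. -/
def elimStep {m n : ℕ} (R C : Fin m → Fin n → ℝ)
    (p : Finset (Fin m) × Finset (Fin n)) : Finset (Fin m) × Finset (Fin n) :=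
  (p.1.filter fun i => ¬ RowDomIn R p.1 p.2 i,
   p.2.filter fun j => ¬ ColDomIn C p.1 p.2 j)

/-- Surviving actions of the subgame `(p.1, p.2)` after iterated elimination of strictly
dominated actions (iterating `m + n` times surely reaches the fixed point). -/
def survivorsFrom {m n : ℕ} (R C : Fin m → Fin n → ℝ)
    (p : Finset (Fin m) × Finset (Fin n)) : Finset (Fin m) × Finset (Fin n) :=
  (elimStep R C)^[m + n] p

/-- The subgame `(p.1, p.2)` is strict-dominance solvable: exactly one action of each
player survives iterated elimination of strictly dominated actions. -/
def SolvableFrom {m n : ℕ} (R C : Fin m → Fin n → ℝ)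
    (p : Finset (Fin m) × Finset (Fin n)) : Prop :=
  (survivorsFrom R C p).1.card = 1 ∧ (survivorsFrom R C p).2.card = 1

/-- Surviving actions of the full game after iterated elimination. -/
def survivors {m n : ℕ} (R C : Fin m → Fin n → ℝ) : Finset (Fin m) × Finset (Fin n) :=
  survivorsFrom R C (Finset.univ, Finset.univ)

/-- The game is strict-dominance solvable. -/
def Solvable {m n : ℕ} (R C : Fin m → Fin n → ℝ) : Prop :=
  SolvableFrom R C (Finset.univ, Finset.univ)

/-- The number of rounds performed by the iterated elimination procedure:
the least `k` such that round `k + 1` deletes nothing more. -/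
def elimRounds {m n : ℕ} (R C : Fin m → Fin n → ℝ) : ℕ :=
  sInf {k | (elimStep R C)^[k + 1] (Finset.univ, Finset.univ)
          = (elimStep R C)^[k] (Finset.univ, Finset.univ)}

/-- Sample space of the random game `G(m,n)`: for each Column action an i.i.d. uniform
permutation giving Row's ordinal payoffs in that column, and for each Row action an
i.i.d. uniform permutation giving Column's ordinal payoffs in that row. -/
abbrev Omega (m n : ℕ) := (Fin n → Equiv.Perm (Fin m)) × (Fin m → Equiv.Perm (Fin n))

/-- Row's payoff matrix of the realized game. -/
def RPay {m n : ℕ} (ω : Omega m n) : Fin m → Fin n → ℝ := fun i j => ((ω.1 j) i : ℕ)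

/-- Column's payoff matrix of the realized game. -/
def CPay {m n : ℕ} (ω : Omega m n) : Fin m → Fin n → ℝ := fun i j => ((ω.2 i) j : ℕ)

/-- Probability of an event under the uniform distribution on `Omega m n`
(i.e. all `m + n` permutations uniform and mutually independent). -/
def Pr {m n : ℕ} (E : Set (Omega m n)) : ℝ :=
  (E.toFinite.toFinset.card : ℝ) / (Fintype.card (Omega m n) : ℝ)

open Classical in
/-- Number of Row actions that are not strictly dominated. -/
def UR {m n : ℕ} (ω : Omega m n) : ℕ :=
  (Finset.univ.filter fun i => ¬ RowDomIn (RPay ω) Finset.univ Finset.univ i).card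

open Classical in
/-- Number of Column actions that are not strictly dominated. -/
def UC {m n : ℕ} (ω : Omega m n) : ℕ :=
  (Finset.univ.filter fun j => ¬ ColDomIn (CPay ω) Finset.univ Finset.univ j).card

/-- Number of Row actions surviving iterated elimination. -/
def SR {m n : ℕ} (ω : Omega m n) : ℕ := (survivors (RPay ω) (CPay ω)).1.card

/-- Number of Column actions surviving iterated elimination. -/
def SC {m n : ℕ} (ω : Omega m n) : ℕ := (survivors (RPay ω) (CPay ω)).2.card

/-- The realized game is strict-dominance solvable. -/
def GameSolvable {m n : ℕ} (ω : Omega m n) : Prop := Solvable (RPay ω) (CPay ω)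

/-- Number of rounds of the iterated elimination procedure in the realized game. -/
def GameRounds {m n : ℕ} (ω : Omega m n) : ℕ := elimRounds (RPay ω) (CPay ω)

/-- `π(m,n)`: probability that the random game `G(m,n)` is strict-dominance solvable. -/
def probSolvable (m n : ℕ) : ℝ := Pr {ω : Omega m n | GameSolvable ω}

/-- Expected number of Column's strictly undominated actions, `E[U^C(m,n)]`. -/
def expUC (m n : ℕ) : ℝ :=
  (∑ ω : Omega m n, (UC ω : ℝ)) / (Fintype.card (Omega m n) : ℝ)

/-- Expected number of Column actions surviving iterated elimination, `E[S^C(m,n)]`. -/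
def expSC (m n : ℕ) : ℝ :=
  (∑ ω : Omega m n, (SC ω : ℝ)) / (Fintype.card (Omega m n) : ℝ)

open Classical in
/-- `E[I(m,n)]`: expected number of elimination rounds conditional on the game being
strict-dominance solvable. -/
def condExpRounds (m n : ℕ) : ℝ :=
  (∑ ω : Omega m n, if GameSolvable ω then (GameRounds ω : ℝ) else 0) /
    (∑ ω : Omega m n, if GameSolvable ω then (1 : ℝ) else 0)

/-- Unsigned Stirling numbers of the first kind. -/
def stirling1 : ℕ → ℕ → ℕ
  | 0, 0 => 1
  | 0, _ + 1 => 0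
  | _ + 1, 0 => 0
  | n + 1, k + 1 => n * stirling1 n (k + 1) + stirling1 n k

end

/-
With two Row actions, the first round deletes exactly the Column actions off the Pareto front `F`
of Column's two payoff rows, and the front columns are never deleted while both Row actions
remain. If one Row action is a best reply at every column of `F`, it strictly dominates the
other on `F`; Row is then left with it and Column with its single best reply, so `S^C = 1`.
Otherwise each Row action is a best reply at some front column, nothing more is ever deleted,
and `S^C = |F| ≥ 2`.

Writing Column's payoff rows as permutations `a, b`, `|F|` is the number of right-to-left maxima
of `b a⁻¹`. Inserting the smallest value into a permutation of `N` letters creates a new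
right-to-left maximum only at the last position, so `∑_σ x ^ rtl(σ) y ^ (N - rtl(σ)) =
∏_{i<N} (x + i y)`. At `y = 1` this is the rising factorial, whose coefficients are the Stirling
numbers `s(N, k)`; at `(x, y) = (1, 2)` it is `(2N-1)!!`. Given `F`, exactly `2 · 2^(n-|F|)` of
the `2^n` choices of Row's payoffs make one Row action a best reply on all of `F`.
-/

open Equiv

open Polynomial in
theorem ascPochhammer_eq_prod_range (S : Type*) [CommSemiring S] (n : ℕ) :
    ascPochhammer S n = ∏ i ∈ range n, (X + (i : S[X])) := by
  induction n with
  | zero => simp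
  | succ n ih => rw [ascPochhammer_succ_right, ih, prod_range_succ]

theorem coeff_ascPochhammer_nat (n k : ℕ) :
    (ascPochhammer ℕ n).coeff k = Nat.stirlingFirst n k := by
  induction n generalizing k with
  | zero => cases k <;> simp [Polynomial.coeff_one]
  | succ n ih =>
    rw [ascPochhammer_succ_right, mul_add, Polynomial.coeff_add, ← Nat.cast_comm,
      ← Polynomial.C_eq_natCast, Polynomial.coeff_C_mul]
    cases k with
    | zero => cases n <;> simp [ih]
    | succ k => simp [ih, Nat.stirlingFirst_succ_succ]; ring

theorem stirling1_eq_stirlingFirst : stirling1 = Nat.stirlingFirst := by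
  funext n k
  induction n generalizing k with
  | zero => cases k <;> rfl
  | succ n ih => cases k <;> simp [stirling1, Nat.stirlingFirst_succ_succ, ih]

open scoped Nat in
theorem Nat.doubleFactorial_two_mul_sub_one (n : ℕ) :
    (2 * n - 1)‼ = ∏ i ∈ range n, (1 + i * 2) := by
  cases n with
  | zero => rfl
  | succ n =>
    rw [prod_range_succ', show 2 * (n + 1) - 1 = 2 * n + 1 by omega, doubleFactorial_eq_prod_odd]
    simp only [zero_mul, add_zero, mul_one]
    exact prod_congr rfl fun i _ => by ring

namespace Equiv.Perm

variable {N : ℕ}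

def rightToLeftMaxima (σ : Perm (Fin N)) : Finset (Fin N) :=
  univ.filter fun a => ∀ b, a < b → σ b < σ a

theorem mem_rightToLeftMaxima {σ : Perm (Fin N)} {a : Fin N} :
    a ∈ σ.rightToLeftMaxima ↔ ∀ b, a < b → σ b < σ a := by
  simp [rightToLeftMaxima]

def insertMin (q : Fin (N + 1)) (e : Perm (Fin N)) : Perm (Fin (N + 1)) :=
  ((finSuccEquiv' q).trans e.optionCongr).trans (finSuccEquiv' 0).symm

@[simp]
theorem insertMin_apply_self (q : Fin (N + 1)) (e : Perm (Fin N)) : insertMin q e q = 0 := by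
  simp [insertMin]

@[simp]
theorem insertMin_apply_succAbove (q : Fin (N + 1)) (e : Perm (Fin N)) (i : Fin N) :
    insertMin q e (q.succAbove i) = (e i).succ := by
  simp [insertMin]

theorem insertMin_injective :
    Function.Injective fun p : Fin (N + 1) × Perm (Fin N) => insertMin p.1 p.2 := by
  rintro ⟨q, e⟩ ⟨q', e'⟩ h
  simp only at h
  obtain rfl : q = q' := by
    by_contra hne
    obtain ⟨i, rfl⟩ := Fin.exists_succAbove_eq hne
    simpa using (DFunLike.congr_fun h (q'.succAbove i)).symm
  exact Prod.ext rfl (Equiv.ext fun i => Fin.succ_injective _ (by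
    simpa using DFunLike.congr_fun h (q.succAbove i)))

noncomputable def insertMinEquiv (N : ℕ) : Fin (N + 1) × Perm (Fin N) ≃ Perm (Fin (N + 1)) :=
  Equiv.ofBijective _ ((Fintype.bijective_iff_injective_and_card _).mpr
    ⟨insertMin_injective, by simp [Fintype.card_perm, Nat.factorial_succ]⟩)

theorem card_rightToLeftMaxima_insertMin (q : Fin (N + 1)) (e : Perm (Fin N)) :
    #(insertMin q e).rightToLeftMaxima =
      #e.rightToLeftMaxima + if q = Fin.last N then 1 else 0 := by
  have hq : (∀ b, q < b → insertMin q e b < insertMin q e q) ↔ q = Fin.last N := by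
    simp only [insertMin_apply_self, Fin.not_lt_zero, imp_false, not_lt]
    exact ⟨fun h => Fin.last_le_iff.mp (h _), fun h b => h ▸ Fin.le_last b⟩
  have hs : ∀ i, (∀ b, q.succAbove i < b → insertMin q e b < insertMin q e (q.succAbove i)) ↔
      ∀ b, i < b → e b < e i := by
    intro i
    rw [Fin.forall_iff_succAbove q]
    simp [Fin.succAbove_lt_succAbove_iff, Fin.succ_pos]
  simp only [rightToLeftMaxima, card_filter, Fin.sum_univ_succAbove _ q, hq, hs]
  split_ifs <;> ring

theorem card_rightToLeftMaxima_le (σ : Perm (Fin N)) : #σ.rightToLeftMaxima ≤ N :=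
  (card_le_univ _).trans_eq (Fintype.card_fin N)

theorem sum_pow_card_rightToLeftMaxima {R : Type*} [CommSemiring R] (N : ℕ) (x y : R) :
    ∑ σ : Perm (Fin N), x ^ #σ.rightToLeftMaxima * y ^ (N - #σ.rightToLeftMaxima) =
      ∏ i ∈ range N, (x + i * y) := by
  induction N with
  | zero => simp [rightToLeftMaxima]
  | succ N ih =>
    rw [← (insertMinEquiv N).sum_comp, Fintype.sum_prod_type, Fin.sum_univ_castSucc,
      prod_range_succ, ← ih, mul_add, add_comm (_ * x), sum_mul, sum_mul]
    simp only [insertMinEquiv, Equiv.ofBijective_apply, card_rightToLeftMaxima_insertMin,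
      Fin.castSucc_ne_last, if_true, if_false, add_zero, sum_const, card_univ, Fintype.card_fin,
      nsmul_eq_mul, mul_sum]
    congr 1
    · refine sum_congr rfl fun e _ => ?_
      rw [Nat.succ_sub (card_rightToLeftMaxima_le e), pow_succ]; ring
    · refine sum_congr rfl fun e _ => ?_
      rw [Nat.succ_sub_succ, pow_succ]; ring

open Polynomial in
theorem card_filter_card_rightToLeftMaxima_eq (N k : ℕ) :
    #{σ : Perm (Fin N) | #σ.rightToLeftMaxima = k} = Nat.stirlingFirst N k := by
  have h := congrArg (coeff · k) (sum_pow_card_rightToLeftMaxima N (X : ℕ[X]) 1)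
  simp only [one_pow, mul_one, ← ascPochhammer_eq_prod_range,
    coeff_ascPochhammer_nat, finsetSum_coeff, coeff_X_pow] at h
  rw [← h, card_filter]
  simp only [eq_comm]

end Equiv.Perm

theorem Finset.card_filter_prod {α β : Type*} [Fintype α] [Fintype β] (p : α × β → Prop)
    [DecidablePred p] : #{x | p x} = ∑ b, #{a | p (a, b)} := by
  simp only [card_filter]
  exact Fintype.sum_prod_type_right _

theorem Fintype.card_filter_forall_mem {ι β : Type*} [Fintype ι] [DecidableEq ι] [Fintype β]
    [DecidableEq β] (S : Finset ι) (T : Finset β) :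
    #{f : ι → β | ∀ i ∈ S, f i ∈ T} = #T ^ #S * Fintype.card β ^ (Fintype.card ι - #S) := by
  have : ({f : ι → β | ∀ i ∈ S, f i ∈ T} : Finset _) =
      Fintype.piFinset fun i => if i ∈ S then T else univ := by
    ext f
    simp only [mem_filter, mem_univ, true_and, Fintype.mem_piFinset]
    exact ⟨fun h i => by split_ifs with hi; exacts [h i hi, mem_univ _],
      fun h i hi => by simpa [hi] using h i⟩
  rw [this, Fintype.card_piFinset]
  simp only [apply_ite Finset.card, prod_ite, prod_const, card_univ, filter_mem_eq_inter,
    univ_inter, filter_not, card_sdiff_of_subset (subset_univ S)]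

section Elimination

variable {m n : ℕ} (R C : Fin m → Fin n → ℝ)

theorem mem_elimStep_fst {p : Finset (Fin m) × Finset (Fin n)} {i : Fin m} :
    i ∈ (elimStep R C p).1 ↔ i ∈ p.1 ∧ ¬RowDomIn R p.1 p.2 i := by
  simp [elimStep]

theorem mem_elimStep_snd {p : Finset (Fin m) × Finset (Fin n)} {j : Fin n} :
    j ∈ (elimStep R C p).2 ↔ j ∈ p.2 ∧ ¬ColDomIn C p.1 p.2 j := by
  simp [elimStep]

theorem not_rowDomIn_of_forall_le {X : Finset (Fin m)} {Y : Finset (Fin n)} {i : Fin m}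
    {j : Fin n} (hj : j ∈ Y) (hle : ∀ i' ∈ X, R i' j ≤ R i j) : ¬RowDomIn R X Y i :=
  fun ⟨i', hi', hlt⟩ => (hlt j hj).not_ge (hle i' hi')

theorem not_colDomIn_of_forall_le {X : Finset (Fin m)} {Y : Finset (Fin n)} {i : Fin m}
    {j : Fin n} (hi : i ∈ X) (hle : ∀ j' ∈ Y, C i j' ≤ C i j) : ¬ColDomIn C X Y j :=
  fun ⟨j', hj', hlt⟩ => (hlt i hi).not_ge (hle j' hj')

theorem elimStep_nonempty {p : Finset (Fin m) × Finset (Fin n)} (hX : p.1.Nonempty)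
    (hY : p.2.Nonempty) : (elimStep R C p).1.Nonempty ∧ (elimStep R C p).2.Nonempty := by
  obtain ⟨i₀, hi₀⟩ := hX
  obtain ⟨j₀, hj₀⟩ := hY
  obtain ⟨i, hi, hmax⟩ := p.1.exists_max_image (R · j₀) ⟨i₀, hi₀⟩
  obtain ⟨j, hj, hmax'⟩ := p.2.exists_max_image (C i₀ ·) ⟨j₀, hj₀⟩
  exact ⟨⟨i, (mem_elimStep_fst R C).mpr ⟨hi, not_rowDomIn_of_forall_le R hj₀ hmax⟩⟩,
    ⟨j, (mem_elimStep_snd R C).mpr ⟨hj, not_colDomIn_of_forall_le C hi₀ hmax'⟩⟩⟩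

theorem elimStep_singleton (i : Fin m) (j : Fin n) :
    elimStep R C ({i}, {j}) = ({i}, {j}) := by
  obtain ⟨hX, hY⟩ :=
    elimStep_nonempty R C (p := ({i}, {j})) (singleton_nonempty i) (singleton_nonempty j)
  exact Prod.ext (hX.subset_singleton_iff.mp fun _ h => ((mem_elimStep_fst R C).mp h).1)
    (hY.subset_singleton_iff.mp fun _ h => ((mem_elimStep_snd R C).mp h).1)

theorem card_elimStep_snd_singleton {w : Fin m} (hC : Function.Injective (C w))
    {Y : Finset (Fin n)} (hY : Y.Nonempty) : #(elimStep R C ({w}, Y)).2 = 1 := by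
  obtain ⟨j, hj, hmax⟩ := Y.exists_max_image (C w ·) hY
  rw [card_eq_one]
  refine ⟨j, eq_singleton_iff_unique_mem.mpr ⟨(mem_elimStep_snd R C).mpr
    ⟨hj, not_colDomIn_of_forall_le C (mem_singleton_self w) hmax⟩, fun j' hj' => ?_⟩⟩
  obtain ⟨hj'Y, hnd⟩ := (mem_elimStep_snd R C).mp hj'
  by_contra hne
  exact hnd ⟨j, hj, fun i hi => (mem_singleton.mp hi) ▸
    (hmax j' hj'Y).lt_of_ne (hC.ne hne)⟩

end Elimination

section RandomGame

variable {m n : ℕ}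

def front (γ : Fin m → Perm (Fin n)) : Finset (Fin n) :=
  univ.filter fun j => ¬∃ j', ∀ i, γ i j < γ i j'

theorem mem_front {γ : Fin m → Perm (Fin n)} {j : Fin n} :
    j ∈ front γ ↔ ¬∃ j', ∀ i, γ i j < γ i j' := by
  simp [front]

theorem front_nonempty [NeZero m] [NeZero n] (γ : Fin m → Perm (Fin n)) :
    (front γ).Nonempty := by
  obtain ⟨j, -, hj⟩ := univ.exists_max_image (γ 0) univ_nonempty
  exact ⟨j, mem_front.mpr fun ⟨j', h⟩ => (h 0).not_ge (hj j' (mem_univ _))⟩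

theorem RPay_le_RPay_iff (ω : Omega m n) {i i' : Fin m} {j : Fin n} :
    RPay ω i j ≤ RPay ω i' j ↔ ω.1 j i ≤ ω.1 j i' := by
  simp [RPay]

theorem RPay_lt_RPay_iff (ω : Omega m n) {i i' : Fin m} {j : Fin n} :
    RPay ω i j < RPay ω i' j ↔ ω.1 j i < ω.1 j i' := by
  simp [RPay]

theorem colDomIn_CPay_univ_iff (ω : Omega m n) (Y : Finset (Fin n)) (j : Fin n) :
    ColDomIn (CPay ω) univ Y j ↔ ∃ j' ∈ Y, ∀ i, ω.2 i j < ω.2 i j' := by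
  simp [ColDomIn, CPay]

theorem elimStep_univ_univ_snd (ω : Omega m n) :
    (elimStep (RPay ω) (CPay ω) (univ, univ)).2 = front ω.2 := by
  ext j
  simp [mem_elimStep_snd, colDomIn_CPay_univ_iff, mem_front]

theorem elimStep_univ_front_snd (ω : Omega m n) :
    (elimStep (RPay ω) (CPay ω) (univ, front ω.2)).2 = front ω.2 := by
  ext j
  rw [mem_elimStep_snd, colDomIn_CPay_univ_iff]
  exact ⟨And.left, fun hj => ⟨hj, fun ⟨j', _, h⟩ => mem_front.mp hj ⟨j', h⟩⟩⟩

theorem survivors_eq_univ_front (ω : Omega m n)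
    (hbest : ∀ i, ∃ j ∈ front ω.2, ∀ i', ω.1 j i' ≤ ω.1 j i) :
    survivors (RPay ω) (CPay ω) = (univ, front ω.2) := by
  have hrows : ∀ Y, front ω.2 ⊆ Y → (elimStep (RPay ω) (CPay ω) (univ, Y)).1 = univ := by
    intro Y hY
    refine eq_univ_of_forall fun i => (mem_elimStep_fst _ _).mpr ⟨mem_univ i, ?_⟩
    obtain ⟨j, hj, hle⟩ := hbest i
    exact not_rowDomIn_of_forall_le _ (hY hj) fun i' _ => (RPay_le_RPay_iff ω).mpr (hle i')
  have hstart : elimStep (RPay ω) (CPay ω) (univ, univ) = (univ, front ω.2) :=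
    Prod.ext (hrows univ (subset_univ _)) (elimStep_univ_univ_snd ω)
  have hfixed : elimStep (RPay ω) (CPay ω) (univ, front ω.2) = (univ, front ω.2) :=
    Prod.ext (hrows _ subset_rfl) (elimStep_univ_front_snd ω)
  rcases Nat.eq_zero_or_eq_succ_pred (m + n) with h | h
  · obtain ⟨rfl, rfl⟩ : m = 0 ∧ n = 0 := by omega
    exact Prod.ext (Subsingleton.elim _ _) (Subsingleton.elim _ _)
  · rw [survivors, survivorsFrom, h, Function.iterate_succ_apply, hstart,
      Function.iterate_fixed hfixed]

theorem SC_eq_one_of_forall_lt (ω : Omega m n) (hm : 2 ≤ m) {w : Fin m}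
    (hF : (front ω.2).Nonempty) (hw : ∀ j ∈ front ω.2, ∀ i ≠ w, ω.1 j i < ω.1 j w) :
    SC ω = 1 := by
  set E := elimStep (RPay ω) (CPay ω)
  obtain ⟨j₀, hj₀⟩ := hF
  have hw_best : ∀ {X : Finset (Fin m)} {Y}, j₀ ∈ Y → ¬RowDomIn (RPay ω) X Y w :=
    fun hY => not_rowDomIn_of_forall_le _ hY fun i _ => (RPay_le_RPay_iff ω).mpr <| by
      rcases eq_or_ne i w with rfl | hi
      exacts [le_rfl, (hw j₀ hj₀ i hi).le]
  have hw₁ : w ∈ (E (univ, univ)).1 :=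
    (mem_elimStep_fst _ _).mpr ⟨mem_univ w, hw_best (mem_univ _)⟩
  have h₁ : E (univ, univ) = ((E (univ, univ)).1, front ω.2) :=
    Prod.ext rfl (elimStep_univ_univ_snd ω)
  have h₂ : (E (E (univ, univ))).1 = {w} := by
    ext i
    rw [h₁, mem_elimStep_fst, mem_singleton]
    refine ⟨fun ⟨_, hnd⟩ => by_contra fun hi => hnd ⟨w, hw₁, fun j hj => ?_⟩,
      fun hi => hi ▸ ⟨hw₁, hw_best hj₀⟩⟩
    exact (RPay_lt_RPay_iff ω).mpr (hw j hj i hi)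
  have hY₂ : (E (E (univ, univ))).2.Nonempty := by
    rw [h₁]; exact (elimStep_nonempty _ _ (p := (_, front ω.2)) ⟨w, hw₁⟩ ⟨j₀, hj₀⟩).2
  obtain ⟨j, hj⟩ := card_eq_one.mp <| (h₂ ▸ card_elimStep_snd_singleton (RPay ω) (CPay ω)
    (w := w) (fun _ _ h => (ω.2 w).injective (Fin.val_injective (by simpa [CPay] using h))) hY₂)
  have h₃ : E^[3] (univ, univ) = ({w}, {j}) := by
    refine Prod.ext ?_ hj
    have hne := (elimStep_nonempty (RPay ω) (CPay ω) (h₂ ▸ singleton_nonempty w) hY₂).1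
    exact hne.subset_singleton_iff.mp fun i hi => h₂ ▸ ((mem_elimStep_fst _ _).mp hi).1
  have hn : 0 < n := j₀.pos
  rw [SC, survivors, survivorsFrom, show m + n = m + n - 3 + 3 by omega,
    Function.iterate_add_apply, h₃, Function.iterate_fixed (elimStep_singleton _ _ w j),
    card_singleton]

end RandomGame

section TwoRows

variable {n : ℕ}

theorem forall_exists_apply_eq_one {S : Finset (Fin n)} {ρ : Fin n → Perm (Fin 2)}
    (h : ¬∃ w, ∀ j ∈ S, ρ j w = 1) : ∀ i, ∃ j ∈ S, ρ j i = 1 := by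
  have key : ∀ (σ : Perm (Fin 2)) i, σ (Fin.rev i) ≠ 1 → σ i = 1 := by decide
  intro i
  obtain ⟨j, hj, hne⟩ := not_forall₂.mp (not_exists.mp h (Fin.rev i))
  exact ⟨j, hj, key _ _ hne⟩

theorem two_le_card_of_forall_exists_apply_eq_one {S : Finset (Fin n)}
    {ρ : Fin n → Perm (Fin 2)} (h : ∀ i, ∃ j ∈ S, ρ j i = 1) : 2 ≤ #S := by
  obtain ⟨j₀, hj₀, h₀⟩ := h 0
  obtain ⟨j₁, hj₁, h₁⟩ := h 1
  refine one_lt_card.mpr ⟨j₀, hj₀, j₁, hj₁, ?_⟩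
  rintro rfl
  exact absurd ((ρ j₀).injective (h₀.trans h₁.symm)) (by decide)

theorem SC_eq_one_of_exists {ω : Omega 2 n} (hn : 1 ≤ n)
    (h : ∃ w, ∀ j ∈ front ω.2, ω.1 j w = 1) : SC ω = 1 := by
  have : NeZero n := ⟨by omega⟩
  obtain ⟨w, hw⟩ := h
  have key : ∀ σ : Perm (Fin 2), ∀ i w, σ w = 1 → i ≠ w → σ i < σ w := by decide
  exact SC_eq_one_of_forall_lt ω le_rfl (front_nonempty ω.2)
    fun j hj i hi => key _ _ _ (hw j hj) hi

theorem SC_eq_card_front_of_not_exists {ω : Omega 2 n}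
    (h : ¬∃ w, ∀ j ∈ front ω.2, ω.1 j w = 1) : SC ω = #(front ω.2) := by
  rw [SC, survivors_eq_univ_front]
  intro i
  obtain ⟨j, hj, hi⟩ := forall_exists_apply_eq_one h i
  exact ⟨j, hj, fun i' => hi ▸ Fin.le_last _⟩

theorem SC_eq_one_iff {ω : Omega 2 n} (hn : 1 ≤ n) :
    SC ω = 1 ↔ ∃ w, ∀ j ∈ front ω.2, ω.1 j w = 1 := by
  refine ⟨fun h1 => by_contra fun h => ?_, SC_eq_one_of_exists hn⟩
  have := two_le_card_of_forall_exists_apply_eq_one (forall_exists_apply_eq_one h)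
  rw [SC_eq_card_front_of_not_exists h] at h1
  omega

theorem SC_eq_iff {ω : Omega 2 n} (hn : 1 ≤ n) {k : ℕ} (hk : 2 ≤ k) :
    SC ω = k ↔ #(front ω.2) = k ∧ ¬∃ w, ∀ j ∈ front ω.2, ω.1 j w = 1 := by
  by_cases h : ∃ w, ∀ j ∈ front ω.2, ω.1 j w = 1
  · simp only [SC_eq_one_of_exists hn h, h, not_true_eq_false, and_false, iff_false]
    omega
  · simp only [SC_eq_card_front_of_not_exists h, h, not_false_eq_true, and_true]

theorem card_filter_exists_forall_apply_eq_one {S : Finset (Fin n)} (hS : S.Nonempty) :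
    #{ρ : Fin n → Perm (Fin 2) | ∃ w, ∀ j ∈ S, ρ j w = 1} = 2 * 2 ^ (n - #S) := by
  have hT : ∀ w : Fin 2, #{π : Perm (Fin 2) | π w = 1} = 1 := by decide
  have hw : ∀ w : Fin 2, #{ρ : Fin n → Perm (Fin 2) | ∀ j ∈ S, ρ j w = 1} = 2 ^ (n - #S) := by
    intro w
    simpa [hT, Fintype.card_perm] using
      Fintype.card_filter_forall_mem S {π : Perm (Fin 2) | π w = 1}
  obtain ⟨j₀, hj₀⟩ := hS
  simp only [Fin.exists_fin_two, filter_or]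
  rw [card_union_of_disjoint, hw, hw, two_mul]
  refine disjoint_filter.mpr fun ρ _ h₀ h₁ => ?_
  exact absurd ((ρ j₀).injective ((h₀ j₀ hj₀).trans (h₁ j₀ hj₀).symm)) (by decide)

theorem card_filter_not_exists_forall_apply_eq_one {S : Finset (Fin n)} (hS : S.Nonempty) :
    #{ρ : Fin n → Perm (Fin 2) | ¬∃ w, ∀ j ∈ S, ρ j w = 1} = 2 ^ n - 2 * 2 ^ (n - #S) := by
  have := card_filter_add_card_filter_not (s := univ)
    fun ρ : Fin n → Perm (Fin 2) => ∃ w, ∀ j ∈ S, ρ j w = 1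
  rw [card_filter_exists_forall_apply_eq_one hS, card_univ, Fintype.card_fun, Fintype.card_perm,
    Fintype.card_fin, Fintype.card_fin, Nat.factorial_two] at this
  omega

theorem card_front_eq (γ : Fin 2 → Perm (Fin n)) :
    #(front γ) = #(γ 1 * (γ 0)⁻¹).rightToLeftMaxima := by
  have : front γ = (γ 1 * (γ 0)⁻¹).rightToLeftMaxima.map (γ 0).symm.toEmbedding := by
    ext j
    rw [mem_map_equiv, Equiv.symm_symm, mem_front, Perm.mem_rightToLeftMaxima,
      ← (γ 0).forall_congr_right]
    simp only [Fin.forall_fin_two, not_exists, not_and, not_lt, Perm.mul_apply,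
      Perm.inv_def, symm_apply_apply]
    refine forall_congr' fun j' => imp_congr_right fun h => Ne.le_iff_lt ?_
    exact (γ 1).injective.ne (ne_of_apply_ne (γ 0) h.ne')
  rw [this, card_map]

theorem sum_comp_card_front {M : Type*} [AddCommMonoid M] (f : ℕ → M) :
    ∑ γ : Fin 2 → Perm (Fin n), f #(front γ) =
      n.factorial • ∑ σ : Perm (Fin n), f #σ.rightToLeftMaxima := by
  simp only [card_front_eq]
  rw [← (piFinTwoEquiv fun _ => Perm (Fin n)).symm.sum_comp, Fintype.sum_prod_type]
  simp only [piFinTwoEquiv_symm_apply, Fin.cons_zero, Fin.cons_one]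
  rw [sum_congr rfl fun a _ => Equiv.sum_comp (Equiv.mulRight a⁻¹) fun σ => f #σ.rightToLeftMaxima,
    sum_const, card_univ, Fintype.card_perm, Fintype.card_fin]

end TwoRows

section Counting

variable {n : ℕ}

theorem card_filter_SC_eq_one (hn : 1 ≤ n) :
    #{ω : Omega 2 n | SC ω = 1} = 2 * n.factorial * Nat.doubleFactorial (2 * n - 1) := by
  have : NeZero n := ⟨by omega⟩
  have hgf := Perm.sum_pow_card_rightToLeftMaxima n (1 : ℕ) 2
  simp only [one_pow, one_mul, Nat.cast_id] at hgf
  simp only [SC_eq_one_iff hn]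
  rw [card_filter_prod]
  simp only [card_filter_exists_forall_apply_eq_one (front_nonempty _)]
  rw [sum_comp_card_front fun k => 2 * 2 ^ (n - k), ← mul_sum, hgf,
    Nat.doubleFactorial_two_mul_sub_one, smul_eq_mul]
  ring

theorem card_filter_SC_eq {k : ℕ} (hn : 1 ≤ n) (hk : 2 ≤ k) :
    #{ω : Omega 2 n | SC ω = k} = n.factorial * stirling1 n k * (2 ^ n - 2 * 2 ^ (n - k)) := by
  have : NeZero n := ⟨by omega⟩
  have hrows : ∀ γ : Fin 2 → Perm (Fin n),
      #{ρ : Fin n → Perm (Fin 2) | #(front γ) = k ∧ ¬∃ w, ∀ j ∈ front γ, ρ j w = 1} =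
        if #(front γ) = k then 2 ^ n - 2 * 2 ^ (n - k) else 0 := by
    intro γ
    split_ifs with h
    · simp only [h, true_and, card_filter_not_exists_forall_apply_eq_one (front_nonempty γ)]
    · simp [h]
  simp only [SC_eq_iff hn hk]
  rw [card_filter_prod]
  simp only [hrows]
  rw [sum_comp_card_front fun k' => if k' = k then 2 ^ n - 2 * 2 ^ (n - k) else 0, ← sum_filter,
    sum_const, Perm.card_filter_card_rightToLeftMaxima_eq, stirling1_eq_stirlingFirst,
    smul_eq_mul, smul_eq_mul, mul_assoc]

theorem card_Omega (m : ℕ) : Fintype.card (Omega m n) = m.factorial ^ n * n.factorial ^ m := by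
  simp [Fintype.card_perm]

theorem Pr_eq_card_filter_div {m : ℕ} (p : Omega m n → Prop) [DecidablePred p] :
    Pr {ω | p ω} = #{ω | p ω} / Fintype.card (Omega m n) := by
  rw [Pr, Set.Finite.toFinset_ofPred]

end Counting

/-- In a random game `G(2,n)` with `n ≥ 1`:
`Pr(S^C(2,n) = 1) = (2n−1)!!/(2^(n−1)·n!)`, and for every `k` with `2 ≤ k ≤ n`,
`Pr(S^C(2,n) = k) = (s(n,k)/n!)·(1 − 1/2^(k−1))`. -/
theorem stmt8 (n : ℕ) (hn : 1 ≤ n) :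
    Pr {ω : Omega 2 n | SC ω = 1}
      = (Nat.doubleFactorial (2 * n - 1) : ℝ) / (2 ^ (n - 1) * (Nat.factorial n : ℝ)) ∧
    ∀ k : ℕ, 2 ≤ k → k ≤ n →
      Pr {ω : Omega 2 n | SC ω = k}
        = (stirling1 n k : ℝ) / (Nat.factorial n : ℝ) * (1 - 1 / 2 ^ (k - 1)) := by
  have hfac : (n.factorial : ℝ) ≠ 0 := by positivity
  have hcard : (Fintype.card (Omega 2 n) : ℝ) = 2 ^ n * n.factorial ^ 2 := by
    rw [card_Omega, Nat.factorial_two]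
    push_cast
    ring
  refine ⟨?_, fun k hk hkn => ?_⟩
  · have hsplit : (2 : ℝ) ^ n = 2 ^ (n - 1) * 2 := by
      rw [← pow_succ, Nat.sub_add_cancel hn]
    rw [Pr_eq_card_filter_div, card_filter_SC_eq_one hn, hcard, hsplit]
    push_cast
    field_simp
  · have hle : 2 * 2 ^ (n - k) ≤ 2 ^ n := by
      rw [← pow_succ']
      exact Nat.pow_le_pow_right two_pos (by omega)
    have hsplit : (2 : ℝ) ^ n = 2 ^ (n - k) * 2 ^ (k - 1) * 2 := by
      rw [← pow_add, ← pow_succ]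
      congr 1
      omega
    rw [Pr_eq_card_filter_div, card_filter_SC_eq hn hk, hcard]
    push_cast [hle]
    rw [hsplit]
    field_simp
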